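/- Let p be a prime and k, m, n, a, b, c, u positive integers with q = p^m, k | q−1, n = (q−1)/k, m = ab, n = bc, b > 1, u = (p^a−1)/c, such that c is a primitive divisor of p^a−1, n is a primitive divisor of p^m−1, and (p−1) | c. For a prime power Q, divisor j of Q−1 and α ∈ F_Q, write N_{j,α}(F_Q) = 1 + #{(x,y) ∈ F_Q × F_Q : y^p − y = α x^j}. Then: for each β ∈ F_{p^m} there exist α_1, …, α_b ∈ F_{p^a} such that N_{k,β}(F_{p^m}) = (1/b)·Ψ_b(p^a)·Σ_{i=1}^b N_{u,α_i}(F_{p^a}) − (p+1)·p^a·Ψ_{b−1}(p^a); and conversely, for any given α_1, …, α_b ∈ F_{p^a} there exists β ∈ F_{p^m} satisfying this relation. -/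

import Mathlib

open scoped BigOperators

/-- `Ψ_b(x) = x^(b-1) + ⋯ + x + 1`. -/
def psi (b x : ℕ) : ℕ := ∑ i ∈ Finset.range b, x ^ i

/-- `n` is a primitive divisor of `p^m - 1`. -/
def IsPrimitiveDivisor (n p m : ℕ) : Prop :=
  n ∣ p ^ m - 1 ∧ ∀ t : ℕ, 1 ≤ t → t < m → ¬ n ∣ p ^ t - 1

/-- `N_{j,α}(F) = 1 +` the number of affine points of the Artin–Schreier curve
`y^p - y = α x^j` over the finite field `F`. -/
def ascount (p : ℕ) (F : Type) [Field F] [Fintype F] [DecidableEq F] (j : ℕ) (α : F) : ℕ :=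
  1 + (Finset.univ.filter fun xy : F × F => xy.2 ^ p - xy.2 = α * xy.1 ^ j).card

/-!
Count the points fibrewise in `x`. The equation `y ^ p - y = w` has `p` solutions when `w` lies
in the image `T` of the Artin–Schreier map and none otherwise, and `x ↦ x ^ k` maps `Eˣ`
`k`-to-one onto `μ_n`; hence `N_{k,β}(E) = 1 + p (1 + k #{g ∈ μ_n | β g ∈ T_E})`, and likewise
over `F` with `u` and `μ_c`. For `ζ` of order `n = b c`, `μ_n` is the disjoint union of the
cosets `ζ ^ j μ_c` (`j < b`), and `μ_c ⊆ Fˣ`. Since `T_E ⊆ Tr⁻¹(T_F)` and both have index `p`,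
`T_E = Tr⁻¹(T_F)` for `Tr = Tr_{E/F}`, so `β ζ ^ j η ∈ T_E ↔ η α_j ∈ T_F` with
`α_j = Tr (β ζ ^ j)`. This expresses `N_{k,β}(E)` through the `N_{u,α_j}(F)`, and
`u Ψ_b(p ^ a) = b k` turns it into the stated identity. Conversely, as `n` is a primitive
divisor of `p ^ m - 1`, `ζ` generates `E` over `F`, so `1, ζ, …, ζ ^ (b - 1)` is a basis and the
nondegenerate trace form makes `β ↦ (Tr (β ζ ^ j))_j` a bijection `E → F ^ b`.
-/

open Finset

namespace IsCyclic

variable {G : Type*} [CommGroup G] [IsCyclic G] [Fintype G]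

theorem exists_orderOf_eq {d e : ℕ} (hde : d * e = Fintype.card G) : ∃ g : G, orderOf g = e := by
  obtain ⟨g, hg⟩ := exists_ofOrder_eq_natCard (α := G)
  have hd : d ≠ 0 := by rintro rfl; exact Fintype.card_ne_zero (hde.symm.trans (zero_mul e))
  refine ⟨g ^ d, ?_⟩
  rw [orderOf_pow_of_dvd hd (by rw [hg, Nat.card_eq_fintype_card, ← hde]; exact dvd_mul_right d e),
    hg, Nat.card_eq_fintype_card, ← hde, Nat.mul_div_cancel_left e (Nat.pos_of_ne_zero hd)]

theorem pow_eq_one_iff_exists_pow_eq {d e : ℕ} (hde : d * e = Fintype.card G) {g : G} :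
    g ^ e = 1 ↔ ∃ x : G, x ^ d = g := by
  have hd : 0 < d := Nat.pos_of_mul_pos_right (hde ▸ Fintype.card_pos)
  have hle : (powMonoidHom d : G →* G).range ≤ (powMonoidHom e : G →* G).ker := by
    rintro _ ⟨x, rfl⟩
    simp [← pow_mul, hde, pow_card_eq_one]
  have hcard : Nat.card (powMonoidHom e : G →* G).ker ≤
      Nat.card (powMonoidHom d : G →* G).range := by
    rw [card_powMonoidHom_ker, card_powMonoidHom_range, Nat.card_eq_fintype_card, ← hde,
      Nat.gcd_eq_right (dvd_mul_left e d), Nat.gcd_eq_right (dvd_mul_right d e),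
      Nat.mul_div_cancel_left e hd]
  simpa using (SetLike.ext_iff.mp (Subgroup.eq_of_le_of_card_ge hle hcard) g).symm

variable [DecidableEq G]

theorem card_filter_pow_eq_one {e : ℕ} (he : e ∣ Fintype.card G) :
    #{g : G | g ^ e = 1} = e := by
  calc #{g : G | g ^ e = 1} = Nat.card (powMonoidHom e : G →* G).ker := by
        rw [← Fintype.card_subtype, ← Nat.card_eq_fintype_card]; rfl
    _ = e := by rw [card_powMonoidHom_ker, Nat.card_eq_fintype_card, Nat.gcd_eq_right he]

/-- The `d`-th power map is `d`-to-one onto the `e`-th roots of unity. -/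
theorem card_filter_pow_mem {d e : ℕ} (hde : d * e = Fintype.card G) (P : G → Prop)
    [DecidablePred P] : #{x : G | P (x ^ d)} = d * #{g : G | g ^ e = 1 ∧ P g} := by
  have hfiber : ∀ g : G, g ^ e = 1 → #{x : G | x ^ d = g} = d := by
    intro g hg
    obtain ⟨y, rfl⟩ := (pow_eq_one_iff_exists_pow_eq hde).mp hg
    exact (MonoidHom.card_fiber_eq_of_mem_range (powMonoidHom d) ⟨y, rfl⟩ ⟨1, one_pow d⟩).trans
      (card_filter_pow_eq_one (Dvd.intro e hde))
  rw [card_eq_sum_card_fiberwise (f := (· ^ d)) (t := {g : G | g ^ e = 1 ∧ P g}), mul_comm,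
    ← smul_eq_mul, ← sum_const]
  · refine sum_congr rfl fun g hg => ?_
    rw [mem_filter] at hg
    refine (congrArg card ?_).trans (hfiber g hg.2.1)
    ext x
    simp only [mem_filter, mem_univ, true_and]
    exact ⟨And.right, fun h => ⟨h ▸ hg.2.2, h⟩⟩
  · intro x hx
    simp only [coe_filter, mem_univ, true_and, Set.mem_ofPred_eq] at hx ⊢
    exact ⟨by rw [← pow_mul, hde, pow_card_eq_one], hx⟩

/-- The `(b * c)`-th roots of unity are the disjoint cosets `ζ ^ j * μ_c`, `j < b`. -/
theorem card_filter_pow_mul_eq_one {b c : ℕ} {ζ : G} (hζ : orderOf ζ = b * c) (P : G → Prop)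
    [DecidablePred P] :
    #{g : G | g ^ (b * c) = 1 ∧ P g} =
      ∑ j : Fin b, #{η : G | η ^ c = 1 ∧ P (ζ ^ (j : ℕ) * η)} := by
  have hbc : 0 < b * c := hζ ▸ orderOf_pos ζ
  have hc : c ≠ 0 := (Nat.pos_of_mul_pos_left hbc).ne'
  set s : Finset (Fin b × G) := univ ×ˢ ({η | η ^ c = 1} : Finset G)
  set f : Fin b × G → G := fun x => ζ ^ (x.1 : ℕ) * x.2
  have hinj : Set.InjOn f s := by
    rintro ⟨i, η⟩ hη ⟨j, η'⟩ hη' h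
    simp only [s, coe_product, coe_filter, Set.mem_prod, Set.mem_ofPred_eq] at hη hη'
    have hpow : ζ ^ ((i : ℕ) * c) = ζ ^ ((j : ℕ) * c) := by
      simpa [f, mul_pow, hη.2, hη', ← pow_mul] using congrArg (· ^ c) h
    rw [pow_eq_pow_iff_modEq, hζ] at hpow
    obtain rfl : i = j :=
      Fin.ext (Nat.ModEq.eq_of_lt_of_lt (Nat.ModEq.mul_right_cancel' hc hpow) i.2 j.2)
    simp only [f, mul_right_inj] at h
    rw [h]
  have himage : s.image f = ({g | g ^ (b * c) = 1} : Finset G) := by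
    refine Finset.eq_of_subset_of_card_le ?_ ?_
    · intro g hg
      simp only [s, f, mem_image, mem_product, mem_filter, mem_univ, true_and] at hg ⊢
      obtain ⟨⟨j, η⟩, hη, rfl⟩ := hg
      have hζ' : ζ ^ (b * c) = 1 := hζ ▸ pow_orderOf_eq_one ζ
      have hη' : η ^ (b * c) = 1 := by rw [mul_comm, pow_mul, hη, one_pow]
      show (ζ ^ (j : ℕ) * η) ^ (b * c) = 1
      rw [mul_pow, ← pow_mul, mul_comm (j : ℕ), pow_mul, hζ', one_pow, one_mul, hη']
    · rw [card_image_of_injOn hinj, card_product, card_univ, Fintype.card_fin,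
        card_filter_pow_eq_one ((dvd_mul_left c b).trans (hζ ▸ orderOf_dvd_card))]
      exact card_pow_eq_one_le hbc
  calc #{g : G | g ^ (b * c) = 1 ∧ P g} = #((s.image f).filter P) := by
        rw [himage, filter_filter]
    _ = #(s.filter (P ∘ f)) := by
        rw [filter_image, card_image_of_injOn (hinj.mono (filter_subset _ _))]
        rfl
    _ = ∑ j : Fin b, #{η : G | η ^ c = 1 ∧ P (ζ ^ (j : ℕ) * η)} := by
        simp only [s, card_filter, sum_product, sum_filter, Function.comp, f, ite_and]

theorem card_filter_pow_eq_one_map {H : Type*} [CommGroup H] [IsCyclic H] [Fintype H]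
    [DecidableEq H] {f : G →* H} (hf : Function.Injective f) {c : ℕ} (hc : c ∣ Fintype.card G)
    (P : H → Prop) [DecidablePred P] :
    #{h : H | h ^ c = 1 ∧ P h} = #{g : G | g ^ c = 1 ∧ P (f g)} := by
  have himage : ({g | g ^ c = 1} : Finset G).image f = ({h | h ^ c = 1} : Finset H) := by
    refine Finset.eq_of_subset_of_card_le ?_ ?_
    · intro h hh
      simp only [mem_image, mem_filter, mem_univ, true_and] at hh ⊢
      obtain ⟨g, hg, rfl⟩ := hh
      rw [← map_pow, hg, map_one]
    · rw [card_image_of_injective _ hf, card_filter_pow_eq_one hc]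
      exact card_pow_eq_one_le (Nat.pos_of_dvd_of_pos hc Fintype.card_pos)
  rw [← filter_filter, ← himage, filter_image, card_image_of_injective _ hf, filter_filter]

end IsCyclic

theorem card_filter_eq_ite_add_card_filter_units {K : Type*} [GroupWithZero K] [Fintype K]
    [DecidableEq K] (Q : K → Prop) [DecidablePred Q] :
    #{x : K | Q x} = (if Q 0 then 1 else 0) + #{u : Kˣ | Q u} := by
  have hunits : ({u : Kˣ | Q u} : Finset Kˣ).map ⟨Units.val, Units.val_injective⟩ =
      ({x | Q x} : Finset K).filter (· ≠ 0) := by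
    ext x
    simp only [mem_map, mem_filter, mem_univ, true_and, Function.Embedding.coeFn_mk]
    exact ⟨fun ⟨u, hu, hx⟩ => hx ▸ ⟨hu, u.ne_zero⟩, fun ⟨hx, hx0⟩ => ⟨Units.mk0 x hx0, hx, rfl⟩⟩
  rw [← card_filter_add_card_filter_not (p := (· = 0)), ← hunits, card_map, filter_eq']
  simp only [mem_filter, mem_univ, true_and]
  split_ifs <;> simp

section ArtinSchreier

variable (p : ℕ) [Fact p.Prime] (K : Type*) [Field K] [CharP K p]

def artinSchreier : K →+ K := (frobenius K p).toAddMonoidHom - AddMonoidHom.id K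

variable {p K}

@[simp]
theorem artinSchreier_apply (y : K) : artinSchreier p K y = y ^ p - y := rfl

theorem card_ker_artinSchreier : Nat.card (artinSchreier p K).ker = p := by
  refine (Nat.card_congr (Equiv.subtypeEquivRight fun y => ?_)).trans (Subfield.card_bot K p)
  simp [sub_eq_zero, Subfield.mem_bot_iff_pow_eq_self K p]

theorem index_range_artinSchreier [Finite K] : (artinSchreier p K).range.index = p := by
  rw [AddSubgroup.index_range, card_ker_artinSchreier]

theorem card_filter_pow_sub_self_eq [Fintype K] [DecidableEq K] (w : K) :
    #{y : K | y ^ p - y = w} = if w ∈ (artinSchreier p K).range then p else 0 := by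
  split_ifs with hw
  · calc #{y : K | y ^ p - y = w} = #{y : K | artinSchreier p K y = 0} :=
          AddMonoidHom.card_fiber_eq_of_mem_range _ hw ⟨0, map_zero _⟩
      _ = Nat.card (artinSchreier p K).ker := by
          rw [← Fintype.card_subtype, ← Nat.card_eq_fintype_card]; rfl
      _ = p := card_ker_artinSchreier
  · exact card_eq_zero.mpr (filter_eq_empty_iff.mpr fun y _ hy => hw ⟨y, hy⟩)

end ArtinSchreier

section PointCount

variable {p : ℕ} [Fact p.Prime] {K : Type} [Field K] [CharP K p] [Fintype K] [DecidableEq K]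

theorem ascount_eq_one_add_mul (d : ℕ) (β : K) :
    ascount p K d β = 1 + p * #{x : K | β * x ^ d ∈ (artinSchreier p K).range} := by
  unfold ascount
  rw [card_filter, Fintype.sum_prod_type, card_filter, mul_sum]
  congr 1
  refine sum_congr rfl fun x _ => ?_
  rw [← card_filter]
  simp only [card_filter_pow_sub_self_eq]
  split_ifs <;> simp

theorem ascount_eq {d e : ℕ} (hde : d * e = Fintype.card Kˣ) (β : K) :
    ascount p K d β =
      1 + p * (1 + d * #{g : Kˣ | g ^ e = 1 ∧ β * g ∈ (artinSchreier p K).range}) := by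
  have hd : d ≠ 0 := by rintro rfl; exact Fintype.card_ne_zero (hde.symm.trans (zero_mul e))
  rw [ascount_eq_one_add_mul, card_filter_eq_ite_add_card_filter_units, zero_pow hd, mul_zero,
    if_pos (zero_mem _)]
  simp only [← Units.val_pow_eq_pow_val]
  rw [IsCyclic.card_filter_pow_mem hde (fun g : Kˣ => β * (g : K) ∈ (artinSchreier p K).range)]

end PointCount

section Trace

variable {p : ℕ} [Fact p.Prime] {K L : Type*} [Field K] [Field L] [Finite L] [Algebra K L]

theorem trace_pow_char [CharP L p] (x : L) :
    Algebra.trace K L (x ^ p) = Algebra.trace K L x ^ p := by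
  apply (algebraMap K L).injective
  rw [map_pow (algebraMap K L), FiniteField.algebraMap_trace_eq_sum_pow,
    FiniteField.algebraMap_trace_eq_sum_pow, sum_pow_char]
  exact sum_congr rfl fun i _ => pow_right_comm _ _ _

/-- Both sides have index `p`, and the trace commutes with the Artin–Schreier map. -/
theorem range_artinSchreier_eq_comap_trace [CharP K p] [CharP L p] :
    (artinSchreier p L).range =
      (artinSchreier p K).range.comap (Algebra.trace K L).toAddMonoidHom := by
  have : Finite K := Finite.of_injective _ (algebraMap K L).injective
  have hle : (artinSchreier p L).range ≤
      (artinSchreier p K).range.comap (Algebra.trace K L).toAddMonoidHom := by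
    rintro _ ⟨y, rfl⟩
    exact ⟨Algebra.trace K L y, by simp [trace_pow_char]⟩
  have hcomap := AddSubgroup.card_mul_index
    ((artinSchreier p K).range.comap (Algebra.trace K L).toAddMonoidHom)
  have hrange := AddSubgroup.card_mul_index (artinSchreier p L).range
  rw [AddSubgroup.index_comap_of_surjective _ (Algebra.trace_surjective K L),
    index_range_artinSchreier] at hcomap
  rw [index_range_artinSchreier] at hrange
  exact AddSubgroup.eq_of_le_of_card_ge hle
    (Nat.eq_of_mul_eq_mul_right (Fact.out : p.Prime).pos (hcomap.trans hrange.symm)).le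

end Trace

theorem card_filter_mem_range_artinSchreier_eq_sum {p : ℕ} [Fact p.Prime] {F E : Type*}
    [Field F] [Fintype F] [DecidableEq F] [CharP F p] [Field E] [Fintype E] [DecidableEq E]
    [CharP E p] [Algebra F E] {b c : ℕ} {ζ : Eˣ} (hζ : orderOf ζ = b * c)
    (hc : c ∣ Fintype.card Fˣ) (β : E) :
    #{g : Eˣ | g ^ (b * c) = 1 ∧ β * g ∈ (artinSchreier p E).range} =
      ∑ j : Fin b, #{η : Fˣ | η ^ c = 1 ∧
        Algebra.trace F E (β * ζ ^ (j : ℕ)) * η ∈ (artinSchreier p F).range} := by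
  rw [IsCyclic.card_filter_pow_mul_eq_one hζ]
  refine sum_congr rfl fun j _ => ?_
  rw [IsCyclic.card_filter_pow_eq_one_map (Units.map_injective (f := (algebraMap F E : F →* E))
    (algebraMap F E).injective) hc]
  refine congrArg card (filter_congr fun η _ => and_congr_right fun _ => ?_)
  have hsmul : β * ((ζ : E) ^ (j : ℕ) * algebraMap F E η) = (η : F) • (β * (ζ : E) ^ (j : ℕ)) := by
    rw [Algebra.smul_def]
    ring
  rw [range_artinSchreier_eq_comap_trace (K := F), AddSubgroup.mem_comap,
    LinearMap.toAddMonoidHom_coe]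
  simp only [Units.val_mul, Units.val_pow_eq_pow_val, Units.coe_map, MonoidHom.coe_coe]
  rw [hsmul, map_smul, smul_eq_mul, mul_comm]

theorem nonempty_ringHom_of_card_eq_pow {F E : Type*} [Field F] [Fintype F] [Field E]
    [Fintype E] {p a m : ℕ} (hp : p.Prime) (hF : Fintype.card F = p ^ a)
    (hE : Fintype.card E = p ^ m) (ham : a ∣ m) : Nonempty (F →+* E) := by
  have : Fact p.Prime := ⟨hp⟩
  have : CharP F p := charP_of_card_eq_prime_pow hF
  have : CharP E p := charP_of_card_eq_prime_pow hE
  let := ZMod.algebra F p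
  let := ZMod.algebra E p
  have hFa : Module.finrank (ZMod p) F = a :=
    Nat.pow_right_injective hp.two_le ((FiniteField.pow_finrank_eq_card p F).trans hF)
  have hEm : Module.finrank (ZMod p) E = m :=
    Nat.pow_right_injective hp.two_le ((FiniteField.pow_finrank_eq_card p E).trans hE)
  obtain ⟨f⟩ := FiniteField.nonempty_algHom_of_finrank_dvd (F := ZMod p) (K := F) (L := E)
    (by rwa [hFa, hEm])
  exact ⟨f.toRingHom⟩

theorem bijective_trace_mul_pow {F E : Type*} [Field F] [Field E] [Fintype F] [Fintype E]
    [Algebra F E] {b : ℕ} (hb : Module.finrank F E = b) {ζ : E} (hζ : Algebra.adjoin F {ζ} = ⊤) :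
    Function.Bijective fun β : E => fun i : Fin b => Algebra.trace F E (β * ζ ^ (i : ℕ)) := by
  set pb := PowerBasis.ofAdjoinEqTop (Algebra.IsIntegral.isIntegral ζ) hζ
  have hdim : pb.dim = b := pb.finrank.symm.trans hb
  refine (Fintype.bijective_iff_injective_and_card _).mpr ⟨fun β₁ β₂ h => ?_, ?_⟩
  · have hbasis : ∀ i, Algebra.trace F E ((β₁ - β₂) * pb.basis i) = 0 := by
      intro i
      rw [pb.coe_basis, PowerBasis.ofAdjoinEqTop_gen, sub_mul, map_sub, sub_eq_zero]
      exact congrFun h (Fin.cast hdim i)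
    have hall : ∀ v : E, Algebra.trace F E ((β₁ - β₂) * v) = 0 := by
      intro v
      rw [← pb.basis.sum_repr v, mul_sum, map_sum]
      exact sum_eq_zero fun i _ => by rw [mul_smul_comm, map_smul, hbasis, smul_zero]
    by_contra hne
    obtain ⟨z, hz⟩ := Algebra.trace_surjective F E 1
    have := hall ((β₁ - β₂)⁻¹ * z)
    rw [← mul_assoc, mul_inv_cancel₀ (sub_ne_zero.mpr hne), one_mul, hz] at this
    exact one_ne_zero this
  · rw [Fintype.card_fun, Fintype.card_fin, ← hb, Module.card_eq_pow_finrank (K := F) (V := E)]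

theorem adjoin_eq_top_of_isPrimitiveDivisor {F E : Type*} [Field F] [Field E] [Fintype E]
    [Algebra F E] {p m n : ℕ} (hp : p.Prime) (hE : Fintype.card E = p ^ m)
    (hn : IsPrimitiveDivisor n p m) {ζ : Eˣ} (hζ : orderOf ζ = n) :
    Algebra.adjoin F {(ζ : E)} = ⊤ := by
  suffices hS : IntermediateField.adjoin F {(ζ : E)} = ⊤ by
    rw [← IntermediateField.adjoin_simple_toSubalgebra_of_isAlgebraic (IsAlgebraic.of_finite F _),
      hS, IntermediateField.top_toSubalgebra]
  set S := IntermediateField.adjoin F {(ζ : E)}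
  have hcard : p ^ m = Nat.card S ^ Module.finrank S E := by
    rw [← hE, ← Nat.card_eq_fintype_card, Module.natCard_eq_pow_finrank (K := S)]
  have hr : Module.finrank S E ≠ 0 := Module.finrank_pos.ne'
  obtain ⟨d, -, hd⟩ := (Nat.dvd_prime_pow hp).mp (hcard ▸ dvd_pow_self _ hr)
  have : Fintype S := Fintype.ofFinite S
  have hζS : (ζ : E) ∈ S := IntermediateField.mem_adjoin_simple_self F _
  have hpow : (ζ : E) ^ (p ^ d - 1) = 1 := by
    have := FiniteField.pow_card_sub_one_eq_one (⟨ζ, hζS⟩ : S)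
      fun h => ζ.ne_zero (congrArg Subtype.val h)
    rw [← Nat.card_eq_fintype_card, hd] at this
    simpa using congrArg Subtype.val this
  have hdvd : n ∣ p ^ d - 1 := hζ ▸ orderOf_dvd_of_pow_eq_one (Units.ext (by simpa using hpow))
  have hd1 : 1 ≤ d := by
    rcases Nat.eq_zero_or_pos d with rfl | h
    · have := Finite.one_lt_card (α := S); rw [hd] at this; simp at this
    · exact h
  have hmd : m ≤ d := by
    by_contra hlt
    exact hn.2 d hd1 (not_le.mp hlt) hdvd
  rw [hd, ← pow_mul] at hcard
  have hm := Nat.pow_right_injective hp.two_le hcard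
  have hr1 : Module.finrank S E = 1 := by nlinarith [Nat.pos_of_ne_zero hr]
  exact IntermediateField.finrank_eq_one_iff_eq_top.mp hr1

theorem psi_eq_one_add_mul {b : ℕ} (hb : 0 < b) (x : ℕ) : psi b x = 1 + x * psi (b - 1) x := by
  obtain ⟨b, rfl⟩ := Nat.exists_eq_add_of_lt hb
  rw [psi, psi, zero_add, Nat.add_sub_cancel, geom_sum_succ, add_comm]

theorem mul_psi_eq {Q b c k u : ℕ} (hQ : 1 ≤ Q) (hc : 0 < c) (huc : u * c = Q - 1)
    (hk : b * c * k = Q ^ b - 1) : u * psi b Q = b * k := by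
  refine Nat.eq_of_mul_eq_mul_right hc ?_
  rw [mul_right_comm, huc, mul_comm, psi, geom_sum_mul_of_one_le hQ, ← hk]
  ring

theorem one_add_mul_sum_eq_psi {p a b k u : ℕ} (hb : 0 < b) (hku : u * psi b (p ^ a) = b * k)
    (W : Fin b → ℕ) :
    ((1 + p * (1 + k * ∑ i, W i) : ℕ) : ℚ) =
      (psi b (p ^ a) : ℚ) / b * ∑ i, ((1 + p * (1 + u * W i) : ℕ) : ℚ)
        - ((p : ℚ) + 1) * (p : ℚ) ^ a * (psi (b - 1) (p ^ a) : ℚ) := by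
  have hpsi : (psi b (p ^ a) : ℚ) = 1 + (p : ℚ) ^ a * psi (b - 1) (p ^ a) := by
    exact_mod_cast psi_eq_one_add_mul hb (p ^ a)
  have hku' : (u : ℚ) * psi b (p ^ a) = b * k := by exact_mod_cast hku
  have hb' : (b : ℚ) ≠ 0 := by positivity
  push_cast
  simp only [sum_add_distrib, ← mul_sum, sum_const, card_univ, Fintype.card_fin, nsmul_eq_mul]
  field_simp
  linear_combination (-(1 + (p : ℚ)) * b) * hpsi - (p * ∑ i, (W i : ℚ)) * hku'

theorem stmt13_general (p k m n a b c u : ℕ) (hp : p.Prime)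
    (ha : 0 < a) (hcpos : 0 < c)
    (hn : n * k = p ^ m - 1)
    (hm : m = a * b) (hnbc : n = b * c) (hb : 1 < b)
    (huc : u * c = p ^ a - 1)
    (hnprim : IsPrimitiveDivisor n p m)
    (F E : Type) [Field F] [Fintype F] [DecidableEq F]
    [Field E] [Fintype E] [DecidableEq E]
    (hFcard : Fintype.card F = p ^ a) (hEcard : Fintype.card E = p ^ m) :
    (∀ β : E, ∃ α : Fin b → F,
        (ascount p E k β : ℚ) =
          (psi b (p ^ a) : ℚ) / (b : ℚ) * (∑ i : Fin b, (ascount p F u (α i) : ℚ))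
            - ((p : ℚ) + 1) * (p : ℚ) ^ a * (psi (b - 1) (p ^ a) : ℚ)) ∧
    (∀ α : Fin b → F, ∃ β : E,
        (ascount p E k β : ℚ) =
          (psi b (p ^ a) : ℚ) / (b : ℚ) * (∑ i : Fin b, (ascount p F u (α i) : ℚ))
            - ((p : ℚ) + 1) * (p : ℚ) ^ a * (psi (b - 1) (p ^ a) : ℚ)) := by
  have : Fact p.Prime := ⟨hp⟩
  have : CharP F p := charP_of_card_eq_prime_pow hFcard
  have : CharP E p := charP_of_card_eq_prime_pow hEcard
  obtain ⟨φ⟩ := nonempty_ringHom_of_card_eq_pow hp hFcard hEcard (hm ▸ dvd_mul_right a b)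
  let := φ.toAlgebra
  have hfinrank : Module.finrank F E = b := by
    have h := (Module.card_eq_pow_finrank (K := F) (V := E)).symm
    rw [hEcard, hFcard, ← pow_mul, hm] at h
    exact Nat.eq_of_mul_eq_mul_left ha (Nat.pow_right_injective hp.two_le h)
  have hkn : k * n = Fintype.card Eˣ := by rw [Fintype.card_units, hEcard, ← hn, mul_comm]
  have huc' : u * c = Fintype.card Fˣ := by rw [Fintype.card_units, hFcard, huc]
  obtain ⟨ζ, hζ⟩ := IsCyclic.exists_orderOf_eq hkn
  have hcount : ∀ β : E, (ascount p E k β : ℚ) =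
      (psi b (p ^ a) : ℚ) / (b : ℚ) *
          (∑ i : Fin b, (ascount p F u (Algebra.trace F E (β * ζ ^ (i : ℕ))) : ℚ))
        - ((p : ℚ) + 1) * (p : ℚ) ^ a * (psi (b - 1) (p ^ a) : ℚ) := by
    intro β
    simp only [ascount_eq hkn, ascount_eq huc', hnbc,
      card_filter_mem_range_artinSchreier_eq_sum (hnbc ▸ hζ) (Dvd.intro_left u huc')]
    refine one_add_mul_sum_eq_psi (by omega) (mul_psi_eq (Nat.one_le_pow _ _ hp.pos) hcpos huc ?_) _
    rw [← hnbc, mul_comm n k, hkn, Fintype.card_units, hEcard, hm, pow_mul]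
  have hbij := bijective_trace_mul_pow hfinrank
    (adjoin_eq_top_of_isPrimitiveDivisor hp hEcard hnprim hζ)
  refine ⟨fun β => ⟨_, hcount β⟩, fun α => ?_⟩
  obtain ⟨β, rfl⟩ := hbij.2 α
  exact ⟨β, hcount β⟩

theorem stmt13 (p k m n a b c u : ℕ) (hp : p.Prime)
    (hk : 0 < k) (ha : 0 < a) (hcpos : 0 < c) (hupos : 0 < u)
    (hkdvd : k ∣ p ^ m - 1) (hn : n * k = p ^ m - 1)
    (hm : m = a * b) (hnbc : n = b * c) (hb : 1 < b)
    (huc : u * c = p ^ a - 1)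
    (hcprim : IsPrimitiveDivisor c p a) (hnprim : IsPrimitiveDivisor n p m)
    (hpc : (p - 1) ∣ c)
    (F E : Type) [Field F] [Fintype F] [DecidableEq F]
    [Field E] [Fintype E] [DecidableEq E]
    (hFcard : Fintype.card F = p ^ a) (hEcard : Fintype.card E = p ^ m) :
    (∀ β : E, ∃ α : Fin b → F,
        (ascount p E k β : ℚ) =
          (psi b (p ^ a) : ℚ) / (b : ℚ) * (∑ i : Fin b, (ascount p F u (α i) : ℚ))
            - ((p : ℚ) + 1) * (p : ℚ) ^ a * (psi (b - 1) (p ^ a) : ℚ)) ∧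
    (∀ α : Fin b → F, ∃ β : E,
        (ascount p E k β : ℚ) =
          (psi b (p ^ a) : ℚ) / (b : ℚ) * (∑ i : Fin b, (ascount p F u (α i) : ℚ))
            - ((p : ℚ) + 1) * (p : ℚ) ^ a * (psi (b - 1) (p ^ a) : ℚ)) :=
  stmt13_general p k m n a b c u hp ha hcpos hn hm hnbc hb huc hnprim F E hFcard hEcard
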